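/- For all n ≥ 1, ∑_{k=0}^n (-1)^k q^{C(k,2)} [n choose k]_q F_{2n-k}(s,q) = 0, where F denotes the q-Fibonacci polynomials. -/

import Mathlib

noncomputable section

/-- The field ℚ(q) of rational functions, with q an indeterminate. -/
abbrev K : Type := RatFunc ℚ

/-- The indeterminate q. -/
def q : K := RatFunc.X

/-- The q-integer [n]_q. -/
def qint (n : ℕ) : K := ∑ i ∈ Finset.range n, q ^ i

/-- The q-factorial. -/
def qfact : ℕ → K
  | 0 => 1
  | n + 1 => qint (n + 1) * qfact n

/-- The Gaussian binomial coefficient. -/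
def qbinom (n k : ℕ) : K := qfact n / (qfact k * qfact (n - k))

/-- The (Carlitz) q-Fibonacci polynomials: F_0 = 0, F_1 = 1,
F_n(s,q) = F_{n-1}(s,q) + q^{n-3} s F_{n-2}(s,q). -/
def qFib : ℕ → Polynomial K
  | 0 => 0
  | 1 => 1
  | n + 2 => qFib (n + 1) + Polynomial.C (q ^ ((n : ℤ) - 1)) * Polynomial.X * qFib n

/-- The q-Fibonacci polynomials with q replaced by 1/q. -/
def qFibInv : ℕ → Polynomial K
  | 0 => 0
  | 1 => 1
  | n + 2 => qFibInv (n + 1) + Polynomial.C (q ^ (1 - (n : ℤ))) * Polynomial.X * qFibInv n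


/-!
By the `q`-Pascal rule `[n+1,k] = [n,k-1] + q^k [n,k]`, the alternating sum `S(n+1)` equals
`∑ₖ (-1)^k q^(C(k,2)+k) [n,k] (F(2n+2-k) - F(2n+1-k))`, and the Fibonacci recurrence turns each
difference into `q^(2n-k-1) s F(2n-k)`. Hence `S(n+1) = q^(2n-1) s S(n)`, while `S(0) = F(0) = 0`.
-/

lemma q_ne_zero : q ≠ 0 := RatFunc.X_ne_zero

lemma qint_ne_zero {n : ℕ} (hn : n ≠ 0) : qint n ≠ 0 := by
  have hq : q = algebraMap (Polynomial ℚ) K Polynomial.X := rfl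
  intro h
  rw [qint, hq] at h
  simp_rw [← map_pow, ← map_sum, map_eq_zero_iff _ (RatFunc.algebraMap_injective ℚ)] at h
  simpa [hn] using congrArg (Polynomial.eval 1) h

lemma qint_add (a b : ℕ) : qint (a + b) = qint a + q ^ a * qint b := by
  simp only [qint, Finset.sum_range_add, Finset.mul_sum, pow_add]

lemma qfact_ne_zero (n : ℕ) : qfact n ≠ 0 := by
  induction n with
  | zero => exact one_ne_zero
  | succ n ih => exact mul_ne_zero (qint_ne_zero n.succ_ne_zero) ih

lemma qbinom_zero_right (n : ℕ) : qbinom n 0 = 1 := by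
  simp [qbinom, qfact, qfact_ne_zero]

lemma qbinom_self (n : ℕ) : qbinom n n = 1 := by
  simp [qbinom, qfact, qfact_ne_zero]

lemma qbinom_succ_succ {n k : ℕ} (h : k < n) :
    qbinom (n + 1) (k + 1) = qbinom n k + q ^ (k + 1) * qbinom n (k + 1) := by
  obtain ⟨m, rfl⟩ := Nat.exists_eq_add_of_lt h
  have hsplit : qint (k + m + 2) = qint (k + 1) + q ^ (k + 1) * qint (m + 1) := by
    rw [← qint_add]; ring_nf
  simp only [qbinom, show k + m + 1 + 1 - (k + 1) = m + 1 by omega,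
    show k + m + 1 - k = m + 1 by omega, show k + m + 1 - (k + 1) = m by omega, qfact,
    show k + m + 1 + 1 = k + m + 2 by omega, hsplit]
  have := qfact_ne_zero k
  have := qfact_ne_zero m
  have := qfact_ne_zero (k + m + 1)
  have := qint_ne_zero k.succ_ne_zero
  have := qint_ne_zero m.succ_ne_zero
  field_simp

/-- `qbinom n k` is a junk nonzero value for `n < k`; truncating it to zero there, as `Nat.choose`
does, makes the `q`-Pascal rule `qchoose_succ_succ` hold for all `k`. -/
def qchoose (n k : ℕ) : K := if k ≤ n then qbinom n k else 0

lemma qchoose_of_le {n k : ℕ} (h : k ≤ n) : qchoose n k = qbinom n k := if_pos h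

lemma qchoose_of_lt {n k : ℕ} (h : n < k) : qchoose n k = 0 := if_neg (Nat.not_le.mpr h)

lemma qchoose_zero_right (n : ℕ) : qchoose n 0 = 1 := by
  rw [qchoose_of_le n.zero_le, qbinom_zero_right]

lemma qchoose_succ_succ (n k : ℕ) :
    qchoose (n + 1) (k + 1) = qchoose n k + q ^ (k + 1) * qchoose n (k + 1) := by
  rcases lt_trichotomy k n with h | rfl | h
  · rw [qchoose_of_le (by omega), qchoose_of_le h.le, qchoose_of_le h, qbinom_succ_succ h]
  · rw [qchoose_of_le le_rfl, qchoose_of_le le_rfl, qchoose_of_lt k.lt_succ_self, qbinom_self,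
      qbinom_self, mul_zero, add_zero]
  · rw [qchoose_of_lt (by omega), qchoose_of_lt h, qchoose_of_lt (by omega), mul_zero, add_zero]

/-- The `q`-analogue of `∑ₖ (-1)ᵏ C(n+1,k) f(k) = ∑ₖ (-1)ᵏ C(n,k) (f(k) - f(k+1))`. -/
lemma sum_qchoose_succ_smul {M : Type*} [AddCommGroup M] [Module K M] (n : ℕ) (f : ℕ → M) :
    ∑ k ∈ Finset.range (n + 2), ((-1 : K) ^ k * q ^ k.choose 2 * qchoose (n + 1) k) • f k =
      ∑ k ∈ Finset.range (n + 1),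
        ((-1 : K) ^ k * q ^ k.choose 2 * q ^ k * qchoose n k) • (f k - f (k + 1)) := by
  set c : ℕ → K := fun k ↦ (-1) ^ k * q ^ k.choose 2
  set g : ℕ → M := fun k ↦ (c k * q ^ k * qchoose n k) • f k
  set h : ℕ → M := fun k ↦ (c k * q ^ k * qchoose n k) • f (k + 1)
  have hc (k : ℕ) : c (k + 1) = -(c k * q ^ k) := by
    simp only [c, Nat.choose_succ_succ', Nat.choose_one_right, pow_add, pow_succ]; ring
  have hterm (k : ℕ) : (c (k + 1) * qchoose (n + 1) (k + 1)) • f (k + 1) = g (k + 1) - h k := by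
    simp only [g, h, qchoose_succ_succ, hc, ← sub_smul]
    congr 1
    ring
  have hg : g (n + 1) = 0 := by simp [g, qchoose_of_lt n.lt_succ_self]
  calc ∑ k ∈ Finset.range (n + 2), (c k * qchoose (n + 1) k) • f k
      = ∑ k ∈ Finset.range (n + 1), (g (k + 1) - h k) + g 0 := by
        rw [Finset.sum_range_succ']
        simp [hterm, g, c, qchoose_zero_right]
    _ = ∑ k ∈ Finset.range (n + 2), g k - ∑ k ∈ Finset.range (n + 1), h k := by
        rw [Finset.sum_sub_distrib, Finset.sum_range_succ' g]; abel
    _ = _ := by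
        rw [Finset.sum_range_succ, hg, add_zero, ← Finset.sum_sub_distrib]
        simp only [g, h, c, smul_sub]

open Polynomial in
lemma qFib_add_two_sub (m : ℕ) :
    qFib (m + 2) - qFib (m + 1) = C (q ^ ((m : ℤ) - 1)) * X * qFib m := by
  rw [qFib, add_sub_cancel_left]

def qFibAltSum (n : ℕ) : Polynomial K :=
  ∑ k ∈ Finset.range (n + 1), ((-1 : K) ^ k * q ^ k.choose 2 * qchoose n k) • qFib (2 * n - k)

open Polynomial in
lemma qFibAltSum_succ (n : ℕ) :
    qFibAltSum (n + 1) = C (q ^ (2 * (n : ℤ) - 1)) * X * qFibAltSum n := by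
  rw [qFibAltSum, show 2 * (n + 1) = 2 * n + 2 by ring, sum_qchoose_succ_smul, qFibAltSum,
    Finset.mul_sum]
  refine Finset.sum_congr rfl fun k hk ↦ ?_
  have hkn := Finset.mem_range_succ_iff.mp hk
  obtain ⟨m, hm⟩ : ∃ m, k + m = 2 * n := ⟨2 * n - k, by omega⟩
  rw [show 2 * n + 2 - k = m + 2 by omega, show 2 * n + 2 - (k + 1) = m + 1 by omega,
    show 2 * n - k = m by omega, qFib_add_two_sub]
  have hq : q ^ k * q ^ ((m : ℤ) - 1) = q ^ (2 * (n : ℤ) - 1) := by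
    rw [← zpow_natCast, ← zpow_add₀ q_ne_zero]; congr 1; omega
  simp only [← hq, smul_eq_C_mul, map_mul]
  ring

lemma qFibAltSum_eq_zero (n : ℕ) : qFibAltSum n = 0 := by
  induction n with
  | zero => simp [qFibAltSum, qFib]
  | succ n ih => rw [qFibAltSum_succ, ih, mul_zero]

theorem stmt16_general (n : ℕ) :
    ∑ k ∈ Finset.range (n + 1),
      Polynomial.C ((-1 : K) ^ k * q ^ (k.choose 2) * qbinom n k) * qFib (2 * n - k) = 0 := by
  rw [← qFibAltSum_eq_zero n, qFibAltSum]
  refine Finset.sum_congr rfl fun k hk ↦ ?_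
  rw [qchoose_of_le (Finset.mem_range_succ_iff.mp hk), Polynomial.smul_eq_C_mul]

theorem stmt16 (n : ℕ) (hn : 1 ≤ n) :
    ∑ k ∈ Finset.range (n + 1),
      Polynomial.C ((-1 : K) ^ k * q ^ (k.choose 2) * qbinom n k) * qFib (2 * n - k) = 0 :=
  stmt16_general n

end
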